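/- Let G be a bull-free, gem-free graph with no homogeneous set, and let (A,B) be a tame homogeneous pair of G with associated sets C, D, E, F. If A is not a clique, then E is anti-complete to C and complete to D. -/

import Mathlib

/-- The bull: a triangle `{0,1,2}` with pendant vertices `3` (attached to `1`)
and `4` (attached to `2`). -/
def bull : SimpleGraph (Fin 5) :=
  SimpleGraph.fromRel (fun a b =>
    (a = 0 ∧ b = 1) ∨ (a = 0 ∧ b = 2) ∨ (a = 1 ∧ b = 2) ∨ (a = 1 ∧ b = 3) ∨ (a = 2 ∧ b = 4))

/-- The gem: the path `0 – 1 – 2 – 3` plus a vertex `4` adjacent to all of it. -/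
def gem : SimpleGraph (Fin 5) :=
  SimpleGraph.fromRel (fun a b =>
    (a = 0 ∧ b = 1) ∨ (a = 1 ∧ b = 2) ∨ (a = 2 ∧ b = 3) ∨ a = 4)

/-- A homogeneous set. -/
def IsHomogeneousSet {V : Type*} (G : SimpleGraph V) (X : Set V) : Prop :=
  X.Nontrivial ∧ X ≠ Set.univ ∧
    ∀ v ∉ X, (∀ x ∈ X, G.Adj v x) ∨ (∀ x ∈ X, ¬ G.Adj v x)

/-- Build a gem embedding from five suitable vertices: an induced path
`p0 - p1 - p2 - p3` together with `p4` adjacent to all of them. -/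
lemma gem_emb {V : Type*} (G : SimpleGraph V) (p0 p1 p2 p3 p4 : V)
    (d01 : p0 ≠ p1) (d02 : p0 ≠ p2) (d03 : p0 ≠ p3) (d04 : p0 ≠ p4)
    (d12 : p1 ≠ p2) (d13 : p1 ≠ p3) (d14 : p1 ≠ p4)
    (d23 : p2 ≠ p3) (d24 : p2 ≠ p4) (d34 : p3 ≠ p4)
    (a01 : G.Adj p0 p1) (a12 : G.Adj p1 p2) (a23 : G.Adj p2 p3)
    (a04 : G.Adj p0 p4) (a14 : G.Adj p1 p4) (a24 : G.Adj p2 p4) (a34 : G.Adj p3 p4)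
    (n02 : ¬ G.Adj p0 p2) (n03 : ¬ G.Adj p0 p3) (n13 : ¬ G.Adj p1 p3) :
    Nonempty (gem ↪g G) := by
  refine ⟨⟨⟨![p0,p1,p2,p3,p4], ?_⟩, ?_⟩⟩
  · intro i j h
    fin_cases i <;> fin_cases j <;> simp_all
  · intro i j
    show G.Adj (![p0,p1,p2,p3,p4] i) (![p0,p1,p2,p3,p4] j) ↔ _
    fin_cases i <;> fin_cases j <;>
      simp_all [gem, SimpleGraph.fromRel_adj, G.adj_comm, G.irrefl]

/-- Build a bull embedding from five suitable vertices: a triangle `p0 p1 p2`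
with pendant `p3` attached to `p1` and pendant `p4` attached to `p2`. -/
lemma bull_emb {V : Type*} (G : SimpleGraph V) (p0 p1 p2 p3 p4 : V)
    (d01 : p0 ≠ p1) (d02 : p0 ≠ p2) (d03 : p0 ≠ p3) (d04 : p0 ≠ p4)
    (d12 : p1 ≠ p2) (d13 : p1 ≠ p3) (d14 : p1 ≠ p4)
    (d23 : p2 ≠ p3) (d24 : p2 ≠ p4) (d34 : p3 ≠ p4)
    (a01 : G.Adj p0 p1) (a02 : G.Adj p0 p2) (a12 : G.Adj p1 p2)
    (a13 : G.Adj p1 p3) (a24 : G.Adj p2 p4)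
    (n03 : ¬ G.Adj p0 p3) (n04 : ¬ G.Adj p0 p4) (n14 : ¬ G.Adj p1 p4)
    (n23 : ¬ G.Adj p2 p3) (n34 : ¬ G.Adj p3 p4) :
    Nonempty (bull ↪g G) := by
  refine ⟨⟨⟨![p0,p1,p2,p3,p4], ?_⟩, ?_⟩⟩
  · intro i j h
    fin_cases i <;> fin_cases j <;> simp_all
  · intro i j
    show G.Adj (![p0,p1,p2,p3,p4] i) (![p0,p1,p2,p3,p4] j) ↔ _
    fin_cases i <;> fin_cases j <;>
      simp_all [bull, SimpleGraph.fromRel_adj, G.adj_comm, G.irrefl]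

/-- If every vertex of `B` is constant on the endpoints of every non-edge of `A`, then
the "non-edge component" of `a1` inside `A` is a homogeneous set. -/
lemma build_hom_set {V : Type*} (G : SimpleGraph V) (A B C D E F : Set V)
    (hunion : A ∪ B ∪ C ∪ D ∪ E ∪ F = Set.univ)
    (hCA : ∀ c ∈ C, ∀ a ∈ A, G.Adj c a)
    (hDA : ∀ d ∈ D, ∀ a ∈ A, ¬ G.Adj d a)
    (hEA : ∀ e ∈ E, ∀ a ∈ A, G.Adj e a)
    (hFA : ∀ f ∈ F, ∀ a ∈ A, ¬ G.Adj f a)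
    (a1 a2 : V) (ha1 : a1 ∈ A) (ha2 : a2 ∈ A) (hne : a1 ≠ a2) (hnadj : ¬ G.Adj a1 a2)
    (w : V) (hw : w ∉ A)
    (key : ∀ b ∈ B, ∀ x ∈ A, ∀ y ∈ A, ¬ G.Adj x y → (G.Adj b x ↔ G.Adj b y)) :
    ∃ X : Set V, IsHomogeneousSet G X := by
  set r : V → V → Prop := fun x y => x ∈ A ∧ y ∈ A ∧ ¬ G.Adj x y with hr
  refine ⟨{x | Relation.ReflTransGen r a1 x ∧ x ∈ A}, ⟨a1, ⟨.refl, ha1⟩, a2,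
    ⟨.single ⟨ha1, ha2, hnadj⟩, ha2⟩, hne⟩, ?_, ?_⟩
  · intro h
    apply hw
    have : w ∈ {x | Relation.ReflTransGen r a1 x ∧ x ∈ A} := h.symm ▸ Set.mem_univ w
    exact this.2
  · intro v hv
    have hv6 : v ∈ A ∪ B ∪ C ∪ D ∪ E ∪ F := hunion.symm ▸ Set.mem_univ v
    rcases hv6 with ((((hvA | hvB) | hvC) | hvD) | hvE) | hvF
    · left
      intro x hx
      by_contra hadj
      exact hv ⟨hx.1.tail ⟨hx.2, hvA, fun h => hadj h.symm⟩, hvA⟩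
    · have hconst : ∀ x, Relation.ReflTransGen r a1 x → (G.Adj v x ↔ G.Adj v a1) := by
        intro x h
        induction h with
        | refl => exact Iff.rfl
        | tail h1 h2 ih => exact (key v hvB _ h2.1 _ h2.2.1 h2.2.2).symm.trans ih
      by_cases hva : G.Adj v a1
      · exact Or.inl fun x hx => (hconst x hx.1).mpr hva
      · exact Or.inr fun x hx h => hva ((hconst x hx.1).mp h)
    · exact Or.inl fun x hx => hCA v hvC x hx.2
    · exact Or.inr fun x hx => hDA v hvD x hx.2
    · exact Or.inl fun x hx => hEA v hvE x hx.2
    · exact Or.inr fun x hx => hFA v hvF x hx.2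

/-- Lemma on tame homogeneous pairs in bull-free gem-free graphs without homogeneous
sets: if `A` is not a clique, then `E` is anti-complete to `C` and complete to `D`. -/
theorem hom_pair_A_not_clique {V : Type*} [Fintype V] (G : SimpleGraph V)
    (hbull : ¬ Nonempty (bull ↪g G)) (hgem : ¬ Nonempty (gem ↪g G))
    (hhom : ¬ ∃ X : Set V, IsHomogeneousSet G X)
    (A B C D E F : Set V)
    (hAne : A.Nonempty) (hBne : B.Nonempty)
    (hpw : List.Pairwise Disjoint [A, B, C, D, E, F])
    (hunion : A ∪ B ∪ C ∪ D ∪ E ∪ F = Set.univ)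
    (hC : ∀ c ∈ C, (∀ a ∈ A, G.Adj c a) ∧ (∀ b ∈ B, ¬ G.Adj c b))
    (hD : ∀ d ∈ D, (∀ b ∈ B, G.Adj d b) ∧ (∀ a ∈ A, ¬ G.Adj d a))
    (hE : ∀ e ∈ E, (∀ a ∈ A, G.Adj e a) ∧ (∀ b ∈ B, G.Adj e b))
    (hF : ∀ f ∈ F, (∀ a ∈ A, ¬ G.Adj f a) ∧ (∀ b ∈ B, ¬ G.Adj f b))
    (htame1 : 2 < A.ncard + B.ncard)
    (htame2 : A.ncard + B.ncard + 2 < Fintype.card V)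
    (hmix1 : ∃ a ∈ A, ∃ b ∈ B, G.Adj a b)
    (hmix2 : ∃ a ∈ A, ∃ b ∈ B, ¬ G.Adj a b)
    (hAnotclique : ∃ a1 ∈ A, ∃ a2 ∈ A, a1 ≠ a2 ∧ ¬ G.Adj a1 a2) :
    (∀ e ∈ E, ∀ c ∈ C, ¬ G.Adj e c) ∧ (∀ e ∈ E, ∀ d ∈ D, G.Adj e d) := by
  obtain ⟨a1, ha1, a2, ha2, hane, hanadj⟩ := hAnotclique
  -- extract disjointness facts
  simp only [List.pairwise_cons, List.mem_cons, List.not_mem_nil] at hpw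
  obtain ⟨h1, h2, h3, h4, h5, -⟩ := hpw
  have hAB : Disjoint A B := h1 B (by simp)
  have hAC : Disjoint A C := h1 C (by simp)
  have hAD : Disjoint A D := h1 D (by simp)
  have hAE : Disjoint A E := h1 E (by simp)
  have hBC : Disjoint B C := h2 C (by simp)
  have hBD : Disjoint B D := h2 D (by simp)
  have hBE : Disjoint B E := h2 E (by simp)
  have hCE : Disjoint C E := h3 E (by simp)
  have hDE : Disjoint D E := h4 E (by simp)
  constructor
  · -- E anti-complete to C
    intro e he c hc hec
    apply hhom
    apply build_hom_set G A B C D E F hunion (fun c' hc' => (hC c' hc').1)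
      (fun d' hd' => (hD d' hd').2) (fun e' he' => (hE e' he').1)
      (fun f' hf' => (hF f' hf').1) a1 a2 ha1 ha2 hane hanadj e
      (fun h => hAE.ne_of_mem h he rfl)
    intro b hb x hx y hy hxy
    by_cases hxyeq : x = y
    · subst hxyeq; exact Iff.rfl
    by_cases hbx : G.Adj b x <;> by_cases hby : G.Adj b y
    · exact iff_of_true hbx hby
    · -- gem b - x - c - y with center e
      exact absurd (gem_emb G b x c y e
        (hAB.ne_of_mem hx hb).symm (hBC.ne_of_mem hb hc)
        (hAB.ne_of_mem hy hb).symm (hBE.ne_of_mem hb he)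
        (hAC.ne_of_mem hx hc) hxyeq (hAE.ne_of_mem hx he)
        (hAC.ne_of_mem hy hc).symm (hCE.ne_of_mem hc he) (hAE.ne_of_mem hy he)
        hbx ((hC c hc).1 x hx).symm ((hC c hc).1 y hy)
        ((hE e he).2 b hb).symm ((hE e he).1 x hx).symm hec.symm ((hE e he).1 y hy).symm
        (fun h => (hC c hc).2 b hb h.symm) hby hxy) hgem
    · -- gem b - y - c - x with center e
      exact absurd (gem_emb G b y c x e
        (hAB.ne_of_mem hy hb).symm (hBC.ne_of_mem hb hc)
        (hAB.ne_of_mem hx hb).symm (hBE.ne_of_mem hb he)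
        (hAC.ne_of_mem hy hc) (Ne.symm hxyeq) (hAE.ne_of_mem hy he)
        (hAC.ne_of_mem hx hc).symm (hCE.ne_of_mem hc he) (hAE.ne_of_mem hx he)
        hby ((hC c hc).1 y hy).symm ((hC c hc).1 x hx)
        ((hE e he).2 b hb).symm ((hE e he).1 y hy).symm hec.symm ((hE e he).1 x hx).symm
        (fun h => (hC c hc).2 b hb h.symm) hbx (fun h => hxy h.symm)) hgem
    · exact iff_of_false hbx hby
  · -- E complete to D
    intro e he d hd
    by_contra hed
    apply hhom
    apply build_hom_set G A B C D E F hunion (fun c' hc' => (hC c' hc').1)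
      (fun d' hd' => (hD d' hd').2) (fun e' he' => (hE e' he').1)
      (fun f' hf' => (hF f' hf').1) a1 a2 ha1 ha2 hane hanadj e
      (fun h => hAE.ne_of_mem h he rfl)
    intro b hb x hx y hy hxy
    by_cases hxyeq : x = y
    · subst hxyeq; exact Iff.rfl
    by_cases hbx : G.Adj b x <;> by_cases hby : G.Adj b y
    · exact iff_of_true hbx hby
    · -- bull: triangle x, e, b with pendant y on e and pendant d on b
      exact absurd (bull_emb G x e b y d
        (hAE.ne_of_mem hx he) (hAB.ne_of_mem hx hb) hxyeq (hAD.ne_of_mem hx hd)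
        (hBE.ne_of_mem hb he).symm (hAE.ne_of_mem hy he).symm
        (hDE.ne_of_mem hd he).symm
        (hAB.ne_of_mem hy hb).symm (hBD.ne_of_mem hb hd) (hAD.ne_of_mem hy hd)
        ((hE e he).1 x hx).symm hbx.symm ((hE e he).2 b hb) ((hE e he).1 y hy)
        ((hD d hd).1 b hb).symm
        hxy (fun h => (hD d hd).2 x hx h.symm) hed hby
        (fun h => (hD d hd).2 y hy h.symm)) hbull
    · -- bull: triangle y, e, b with pendant x on e and pendant d on b
      exact absurd (bull_emb G y e b x d
        (hAE.ne_of_mem hy he) (hAB.ne_of_mem hy hb) (Ne.symm hxyeq) (hAD.ne_of_mem hy hd)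
        (hBE.ne_of_mem hb he).symm (hAE.ne_of_mem hx he).symm
        (hDE.ne_of_mem hd he).symm
        (hAB.ne_of_mem hx hb).symm (hBD.ne_of_mem hb hd) (hAD.ne_of_mem hx hd)
        ((hE e he).1 y hy).symm hby.symm ((hE e he).2 b hb) ((hE e he).1 x hx)
        ((hD d hd).1 b hb).symm
        (fun h => hxy h.symm) (fun h => (hD d hd).2 y hy h.symm) hed hbx
        (fun h => (hD d hd).2 x hx h.symm)) hbull
    · exact iff_of_false hbx hby
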